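/- arXiv:1512.07465 — 3 statements merged into one kernel-verified Lean document; each statement's English description precedes it below -/
import Mathlib

section
/- If the metric ds² = dξ⃗² − e^{2φ(ξ,t)} dt² is flat (vanishing Riemann tensor), then ∂_i∂_j e^φ = 0 for all i,j, hence e^{φ(ξ,t)} = B(t) + Σ_i ξ^i a_i(t) for some functions B, a_i of t alone; if moreover B(t) ≠ 0 one can rescale time so that e^φ = 1 + ξ⃗·a⃗(τ). -/
/-- Partial derivative `∂_μ f` on ℝ⁴ (coordinates `x : Fin 4 → ℝ`, index 3 = time). -/
noncomputable def pd (f : (Fin 4 → ℝ) → ℝ) (μ : Fin 4) (x : Fin 4 → ℝ) : ℝ :=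
  fderiv ℝ f x (Pi.single μ 1)

lemma contDiff_pd {f : (Fin 4 → ℝ) → ℝ} (hf : ContDiff ℝ (⊤ : ℕ∞) f) (μ : Fin 4) :
    ContDiff ℝ (⊤ : ℕ∞) (pd f μ) :=
  (hf.fderiv_right (by simp)).clm_apply contDiff_const

lemma pd_const (c : ℝ) (μ : Fin 4) (x : Fin 4 → ℝ) : pd (fun _ => c) μ x = 0 := by
  simp [pd]

lemma pd_mul {f g : (Fin 4 → ℝ) → ℝ} (hf : DifferentiableAt ℝ f x)
    (hg : DifferentiableAt ℝ g x) (μ : Fin 4) :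
    pd (fun y => f y * g y) μ x = pd f μ x * g x + f x * pd g μ x := by
  simp only [pd]
  rw [fderiv_fun_mul hf hg]
  simp only [ContinuousLinearMap.add_apply, ContinuousLinearMap.smul_apply, smul_eq_mul]; ring

lemma pd_exp {f : (Fin 4 → ℝ) → ℝ} (hf : DifferentiableAt ℝ f x) (μ : Fin 4) :
    pd (fun y => Real.exp (f y)) μ x = Real.exp (f x) * pd f μ x := by
  simp only [pd]
  rw [fderiv_exp hf]
  simp

lemma pd_neg {f : (Fin 4 → ℝ) → ℝ} (μ : Fin 4) (x : Fin 4 → ℝ) :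
    pd (fun y => -f y) μ x = -pd f μ x := by
  simp [pd, fderiv_neg]

lemma pd_const_mul {f : (Fin 4 → ℝ) → ℝ} (hf : DifferentiableAt ℝ f x) (c : ℝ) (μ : Fin 4) :
    pd (fun y => c * f y) μ x = c * pd f μ x := by
  simp only [pd]
  rw [fderiv_const_mul hf]
  simp

lemma fderiv_apply_sum {G : (Fin 4 → ℝ) → ℝ} {x : Fin 4 → ℝ}
    (hG : DifferentiableAt ℝ G x) (v : Fin 4 → ℝ) :
    fderiv ℝ G x v = ∑ μ, v μ * pd G μ x := by
  have hv : v = ∑ μ : Fin 4, v μ • (Pi.single μ (1:ℝ) : Fin 4 → ℝ) := by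
    funext j
    rw [Finset.sum_apply]
    simp [Pi.single_apply]
  conv_lhs => rw [hv]
  rw [map_sum]
  simp [pd, smul_eq_mul]

/-- The synchronous metric `g_{ij} = δ_{ij}`, `g_{i4} = 0`, `g_{44} = −e^{2φ}`. -/
noncomputable def gmet (φ : (Fin 4 → ℝ) → ℝ) (x : Fin 4 → ℝ) (μ ν : Fin 4) : ℝ :=
  if μ = 3 ∧ ν = 3 then -Real.exp (2 * φ x) else if μ = ν then 1 else 0

/-- The inverse metric `g^{ij} = δ^{ij}`, `g^{i4} = 0`, `g^{44} = −e^{−2φ}`. -/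
noncomputable def ginv (φ : (Fin 4 → ℝ) → ℝ) (x : Fin 4 → ℝ) (μ ν : Fin 4) : ℝ :=
  if μ = 3 ∧ ν = 3 then -Real.exp (-(2 * φ x)) else if μ = ν then 1 else 0

/-- Christoffel symbols `Γ^λ_{μν} = ½ g^{λρ}(∂_μ g_{ρν} + ∂_ν g_{ρμ} − ∂_ρ g_{μν})`. -/
noncomputable def Gamma (φ : (Fin 4 → ℝ) → ℝ) (l μ ν : Fin 4) (x : Fin 4 → ℝ) : ℝ :=
  (1 / 2) * ∑ ρ, ginv φ x l ρ *
    (pd (fun y => gmet φ y ρ ν) μ x + pd (fun y => gmet φ y ρ μ) ν x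
      - pd (fun y => gmet φ y μ ν) ρ x)

variable {φ : (Fin 4 → ℝ) → ℝ}

lemma pd_gmet (hφ : Differentiable ℝ φ) (ρ ν μ : Fin 4) (x : Fin 4 → ℝ) :
    pd (fun y => gmet φ y ρ ν) μ x =
      if ρ = 3 ∧ ν = 3 then -(2 * Real.exp (2 * φ x) * pd φ μ x) else 0 := by
  by_cases h : ρ = 3 ∧ ν = 3
  · have hfun : (fun y => gmet φ y ρ ν) = fun y => -(fun z => Real.exp (2 * φ z)) y := by
      funext y; simp [gmet, h]
    rw [hfun, if_pos h, pd_neg, pd_exp (by exact ((hφ x).const_mul 2)),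
      pd_const_mul (hφ x)]
    ring
  · have hfun : (fun y => gmet φ y ρ ν) = fun _ => if ρ = ν then (1:ℝ) else 0 := by
      funext y; simp [gmet, h]
    rw [hfun, if_neg h, pd_const]

lemma gamma_eq (hφ : Differentiable ℝ φ) (l μ ν : Fin 4) (x : Fin 4 → ℝ) :
    Gamma φ l μ ν x =
      if l = 3 then
        (if μ = 3 then pd φ ν x else if ν = 3 then pd φ μ x else 0)
      else if μ = 3 ∧ ν = 3 then Real.exp (2 * φ x) * pd φ l x else 0 := by
  have key : Real.exp (-(2 * φ x)) * Real.exp (2 * φ x) = 1 := by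
    rw [← Real.exp_add]; simp
  unfold Gamma
  rw [Finset.sum_eq_single l]
  · simp only [pd_gmet hφ]
    by_cases hl : l = 3
    · subst hl
      have hg : ginv φ x 3 3 = -Real.exp (-(2 * φ x)) := by simp [ginv]
      rw [hg]
      by_cases hμ : μ = 3 <;> by_cases hν : ν = 3 <;> simp [hμ, hν] <;>
        · rw [Real.exp_neg]
          field_simp
    · have hg : ginv φ x l l = 1 := by
        simp [ginv, hl]
      rw [hg, if_neg hl]
      have : ¬(l = 3 ∧ ν = 3) := fun h => hl h.1
      have h2 : ¬(l = 3 ∧ μ = 3) := fun h => hl h.1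
      rw [if_neg this, if_neg h2]
      by_cases h3 : μ = 3 ∧ ν = 3 <;> simp [h3] <;> ring
  · intro ρ _ hρ
    have h1 : ¬(l = 3 ∧ ρ = 3) := fun h => hρ (h.2.trans h.1.symm)
    have h2 : l ≠ ρ := fun h => hρ h.symm
    simp [ginv, h1, h2]
  · intro h; exact absurd (Finset.mem_univ l) h

/-- Riemann tensor `R^λ_{μνρ} = ∂_ν Γ^λ_{μρ} − ∂_ρ Γ^λ_{μν}
      + Γ^λ_{σν}Γ^σ_{μρ} − Γ^λ_{σρ}Γ^σ_{μν}`. -/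
noncomputable def Riem (φ : (Fin 4 → ℝ) → ℝ) (l μ ν ρ : Fin 4) (x : Fin 4 → ℝ) : ℝ :=
  pd (Gamma φ l μ ρ) ν x - pd (Gamma φ l μ ν) ρ x
    + ∑ σ, (Gamma φ l σ ν x * Gamma φ σ μ ρ x - Gamma φ l σ ρ x * Gamma φ σ μ ν x)

lemma gamma_fun_zero (hφ : Differentiable ℝ φ) {i j : Fin 4} (hi : i ≠ 3) (hj : j ≠ 3) :
    Gamma φ 3 j i = fun _ => 0 := by
  funext x; rw [gamma_eq hφ]; simp [hi, hj]

lemma gamma_fun_pd (hφ : Differentiable ℝ φ) {j : Fin 4} (hj : j ≠ 3) :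
    Gamma φ 3 j 3 = pd φ j := by
  funext x; rw [gamma_eq hφ]; simp [hj]

lemma riem_eval (hφ : Differentiable ℝ φ) {i j : Fin 4} (hi : i ≠ 3) (hj : j ≠ 3)
    (x : Fin 4 → ℝ) :
    Riem φ 3 j 3 i x = -(pd (pd φ j) i x) - pd φ i x * pd φ j x := by
  unfold Riem
  rw [gamma_fun_zero hφ hi hj, gamma_fun_pd hφ hj, pd_const, Fin.sum_univ_four]
  simp [gamma_eq hφ, hi, hj]
  ring

lemma hess_phi (hφ : Differentiable ℝ φ)
    (hflat : ∀ (l μ ν ρ : Fin 4) (x : Fin 4 → ℝ), Riem φ l μ ν ρ x = 0)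
    {i j : Fin 4} (hi : i ≠ 3) (hj : j ≠ 3) (x : Fin 4 → ℝ) :
    pd (pd φ j) i x = -(pd φ i x * pd φ j x) := by
  have := hflat 3 j 3 i x
  rw [riem_eval hφ hi hj] at this
  linarith

lemma hess_exp (hφc : ContDiff ℝ (⊤ : ℕ∞) φ)
    (hflat : ∀ (l μ ν ρ : Fin 4) (x : Fin 4 → ℝ), Riem φ l μ ν ρ x = 0)
    {i j : Fin 4} (hi : i ≠ 3) (hj : j ≠ 3) (x : Fin 4 → ℝ) :
    pd (pd (fun y => Real.exp (φ y)) j) i x = 0 := by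
  have hφ : Differentiable ℝ φ := hφc.differentiable (by simp)
  have h1 : pd (fun y => Real.exp (φ y)) j = fun y => Real.exp (φ y) * pd φ j y := by
    funext y; exact pd_exp (hφ y) j
  have hexp : DifferentiableAt ℝ (fun y => Real.exp (φ y)) x := ((hφ x).exp)
  rw [h1, pd_mul hexp (((contDiff_pd hφc j).differentiable (by simp)) x), pd_exp (hφ x),
    hess_phi hφ hflat hi hj]
  ring

/-- base point of the time slice -/
noncomputable def tbase (t : ℝ) : Fin 4 → ℝ := fun μ => if μ = 3 then t else 0

lemma hasDerivAt_line (G : (Fin 4 → ℝ) → ℝ) (hG : Differentiable ℝ G)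
    (c v : Fin 4 → ℝ) (s : ℝ) :
    HasDerivAt (fun s => G (fun μ => c μ + s * v μ))
      (∑ μ, v μ * pd G μ (fun μ => c μ + s * v μ)) s := by
  have hp : HasDerivAt (fun s => (fun μ => c μ + s * v μ)) v s := by
    rw [hasDerivAt_pi]
    intro μ
    simpa using ((hasDerivAt_id s).mul_const (v μ)).const_add (c μ)
  have := (hG (fun μ => c μ + s * v μ)).hasFDerivAt.comp_hasDerivAt s hp
  rwa [fderiv_apply_sum (hG _) v] at this

lemma deriv_const_eval {h : ℝ → ℝ} {k : ℝ} (hh : ∀ s, HasDerivAt h k s) :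
    h 1 = h 0 + k := by
  have hd : Differentiable ℝ (fun s => h s - s * k) :=
    fun s => ((hh s).differentiableAt).sub (differentiableAt_id.mul_const k)
  have hz : ∀ s, deriv (fun s => h s - s * k) s = 0 := by
    intro s
    have := ((hh s).sub ((hasDerivAt_id s).mul_const k)).deriv
    have h2 : deriv (h - fun y => y * k) s = 0 := by simpa using this
    exact h2
  have := is_const_of_deriv_eq_zero hd hz 1 0
  simp at this
  linarith

/-- spatial constancy -/
lemma spatial_const {G : (Fin 4 → ℝ) → ℝ} (hG : Differentiable ℝ G)
    (h0 : ∀ (y : Fin 4 → ℝ) (i : Fin 4), i ≠ 3 → pd G i y = 0) (x : Fin 4 → ℝ) :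
    G x = G (tbase (x 3)) := by
  set c := tbase (x 3) with hc
  set v : Fin 4 → ℝ := fun μ => x μ - c μ with hv
  have hv3 : v 3 = 0 := by simp [hv, hc, tbase]
  have hline : ∀ s, HasDerivAt (fun s => G (fun μ => c μ + s * v μ)) 0 s := by
    intro s
    have := hasDerivAt_line G hG c v s
    rw [Fin.sum_univ_four] at this
    rw [h0 _ 0 (by decide), h0 _ 1 (by decide), h0 _ 2 (by decide), hv3] at this
    simpa using this
  have := deriv_const_eval hline
  simp only [add_zero] at this
  have h1 : (fun μ => c μ + 1 * v μ) = x := by funext μ; simp [hv]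
  have h00 : (fun μ => c μ + 0 * v μ) = c := by funext μ; simp
  rw [h1, h00] at this
  exact this

lemma affine {F : (Fin 4 → ℝ) → ℝ} (hF : ContDiff ℝ (⊤ : ℕ∞) F)
    (hsec : ∀ (x : Fin 4 → ℝ) (i j : Fin 4), i ≠ 3 → j ≠ 3 → pd (pd F j) i x = 0)
    (x : Fin 4 → ℝ) :
    F x = F (tbase (x 3)) + ∑ i : Fin 3, x i.castSucc * pd F i.castSucc (tbase (x 3)) := by
  have hFd := hF.differentiable (by simp)
  have hgrad : ∀ (j : Fin 4), j ≠ 3 → ∀ y : Fin 4 → ℝ, pd F j y = pd F j (tbase (y 3)) :=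
    fun j hj y => spatial_const ((contDiff_pd hF j).differentiable (by simp))
      (fun z i hi => hsec z i j hi hj) y
  set c := tbase (x 3) with hc
  set v : Fin 4 → ℝ := fun μ => x μ - c μ with hv
  have hv3 : v 3 = 0 := by simp [hv, hc, tbase]
  set k := ∑ i : Fin 3, x i.castSucc * pd F i.castSucc c with hk
  have hline : ∀ s, HasDerivAt (fun s => F (fun μ => c μ + s * v μ)) k s := by
    intro s
    have H := hasDerivAt_line F hFd c v s
    have hps3 : (fun μ => c μ + s * v μ) 3 = x 3 := by simp [hc, hv, tbase]
    have heq : (∑ μ, v μ * pd F μ (fun μ => c μ + s * v μ)) = k := by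
      rw [Fin.sum_univ_four, hgrad 0 (by decide), hgrad 1 (by decide), hgrad 2 (by decide)]
      simp only [hv3, mul_zero, add_zero, zero_mul]
      rw [show c 3 = x 3 from by simp [hc, tbase], hk, Fin.sum_univ_three]
      have h0 : Fin.castSucc (0 : Fin 3) = (0 : Fin 4) := rfl
      have h1 : Fin.castSucc (1 : Fin 3) = (1 : Fin 4) := rfl
      have h2 : Fin.castSucc (2 : Fin 3) = (2 : Fin 4) := rfl
      rw [h0, h1, h2]
      simp [hv, hc, tbase]
    rwa [heq] at H
  have hfin := deriv_const_eval hline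
  have h1 : (fun μ => c μ + 1 * v μ) = x := by funext μ; simp [hv]
  have h00 : (fun μ => c μ + 0 * v μ) = c := by funext μ; simp
  rw [h1, h00] at hfin
  rw [hfin, hk]

/-- If the synchronous metric `ds² = dξ⃗² − e^{2φ(ξ,t)} dt²` is flat (vanishing Riemann
tensor), then `∂_i∂_j e^φ = 0` for all spatial `i,j`, hence
`e^{φ(ξ,t)} = B(t) + Σᵢ ξⁱ aᵢ(t)` for functions `B, aᵢ` of `t` alone; and if `B(t) ≠ 0`
for all `t`, time can be rescaled (`dτ = B(t) dt`, i.e. `σ' = B`) so that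
`e^φ = B(t) (1 + ξ⃗·a⃗̃(τ))` with `τ = σ(t)`. -/
theorem stmt_9 (φ : (Fin 4 → ℝ) → ℝ) (hφ : ContDiff ℝ (⊤ : ℕ∞) φ)
    (hflat : ∀ (l μ ν ρ : Fin 4) (x : Fin 4 → ℝ), Riem φ l μ ν ρ x = 0) :
    (∀ (x : Fin 4 → ℝ) (i j : Fin 4), i ≠ 3 → j ≠ 3 →
      pd (pd (fun y => Real.exp (φ y)) j) i x = 0) ∧
    ∃ (B : ℝ → ℝ) (a : ℝ → Fin 3 → ℝ),
      (∀ x : Fin 4 → ℝ,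
        Real.exp (φ x) = B (x 3) + ∑ i : Fin 3, x i.castSucc * a (x 3) i) ∧
      ((∀ t, B t ≠ 0) →
        ∃ (σ : ℝ → ℝ) (atil : ℝ → Fin 3 → ℝ),
          (∀ t, HasDerivAt σ (B t) t) ∧
          (∀ x : Fin 4 → ℝ,
            Real.exp (φ x)
              = B (x 3) * (1 + ∑ i : Fin 3, x i.castSucc * atil (σ (x 3)) i))) := by
  have part1 : ∀ (x : Fin 4 → ℝ) (i j : Fin 4), i ≠ 3 → j ≠ 3 →
      pd (pd (fun y => Real.exp (φ y)) j) i x = 0 :=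
    fun x i j hi hj => hess_exp hφ hflat hi hj x
  refine ⟨part1, ?_⟩
  set F : (Fin 4 → ℝ) → ℝ := fun y => Real.exp (φ y) with hFdef
  have hF : ContDiff ℝ (⊤ : ℕ∞) F := Real.contDiff_exp.comp hφ
  set B : ℝ → ℝ := fun t => Real.exp (φ (tbase t)) with hBdef
  set a : ℝ → Fin 3 → ℝ := fun t i => pd F i.castSucc (tbase t) with hadef
  have hmain : ∀ x : Fin 4 → ℝ,
      Real.exp (φ x) = B (x 3) + ∑ i : Fin 3, x i.castSucc * a (x 3) i := by
    intro x
    exact affine hF part1 x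
  refine ⟨B, a, hmain, ?_⟩
  intro hB
  have hBpos : ∀ t, 0 < B t := fun t => Real.exp_pos _
  have htbase : Continuous tbase := by
    apply continuous_pi
    intro μ
    by_cases h : μ = 3
    · simpa [tbase, h] using continuous_id'
    · simpa [tbase, h] using (continuous_const : Continuous fun _ : ℝ => (0:ℝ))
  have hBcont : Continuous B := Real.continuous_exp.comp
    ((hφ.continuous).comp htbase)
  set σ : ℝ → ℝ := fun t => ∫ s in (0:ℝ)..t, B s with hσdef
  have hσ : ∀ t, HasDerivAt σ (B t) t :=
    fun t => (hBcont.integral_hasStrictDerivAt 0 t).hasDerivAt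
  have hmono : StrictMono σ :=
    strictMono_of_deriv_pos (fun t => by rw [(hσ t).deriv]; exact hBpos t)
  have hinj := hmono.injective
  refine ⟨σ, fun τ i => a (Function.invFun σ τ) i / B (Function.invFun σ τ), hσ, ?_⟩
  intro x
  have hlinv : Function.invFun σ (σ (x 3)) = x 3 :=
    Function.leftInverse_invFun hinj (x 3)
  rw [hmain x]
  rw [mul_add, mul_one, Finset.mul_sum]
  congr 1
  apply Finset.sum_congr rfl
  intro i _
  show x i.castSucc * a (x 3) i
      = B (x 3) * (x i.castSucc * (a (Function.invFun σ (σ (x 3))) i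
          / B (Function.invFun σ (σ (x 3)))))
  rw [hlinv]
  field_simp
  rw [mul_div_assoc, div_self (hB (x 3)), mul_one]
end

section
/- The general solution of dΩ_{μν}/dτ = Ω_{ρν} W^ρ_μ + Ω_{μρ} W^ρ_ν + A_{μν}(τ) with Ω(0) = Ω⁰ is Ω_{μν}(τ) = Ω⁰_{αβ} Λ^α_μ(τ) Λ^β_ν(τ) + ∫₀^τ (A_{αβ}(t) G_μ^α(τ,t) G_ν^β(τ,t)) dt, and it is skew-symmetric for all τ whenever Ω⁰ and A(τ) are skew-symmetric. -/
open Matrix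

section Aux
attribute [local instance] Matrix.linftyOpNormedRing Matrix.linftyOpNormedAlgebra

noncomputable abbrev M4aux := Matrix (Fin 4) (Fin 4) ℝ

noncomputable def entryCLM (μ ν : Fin 4) : M4aux →L[ℝ] ℝ :=
  LinearMap.toContinuousLinearMap
    { toFun := fun m => m μ ν
      map_add' := fun _ _ => rfl
      map_smul' := fun _ _ => rfl }

lemma hasDerivAt_of_entries {f : ℝ → M4aux} {f' : M4aux} {x : ℝ}
    (h : ∀ μ ν, HasDerivAt (fun s => f s μ ν) (f' μ ν) x) :
    HasDerivAt f f' x := by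
  have : HasDerivAt (fun s => ∑ μ : Fin 4, ∑ ν : Fin 4, f s μ ν • Matrix.single μ ν (1:ℝ))
      (∑ μ : Fin 4, ∑ ν : Fin 4, f' μ ν • Matrix.single μ ν (1:ℝ)) x := by
    refine HasDerivAt.fun_sum fun μ _ => HasDerivAt.fun_sum fun ν _ => ?_
    exact (h μ ν).smul_const _
  convert this using 1
  · funext s
    conv_lhs => rw [matrix_eq_sum_single (f s)]
    simp [smul_single]
  · conv_lhs => rw [matrix_eq_sum_single f']
    simp [smul_single]

lemma entry_hasDerivAt {f : ℝ → M4aux} {f' : M4aux} {x : ℝ}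
    (h : HasDerivAt f f' x) (μ ν : Fin 4) :
    HasDerivAt (fun s => f s μ ν) (f' μ ν) x := by
  exact ((entryCLM μ ν).hasFDerivAt.comp x h.hasFDerivAt).hasDerivAt.congr_deriv
    (by show ((1:ℝ) • f') μ ν = f' μ ν; simp)

theorem stmt_16_aux (W A : ℝ → Matrix (Fin 4) (Fin 4) ℝ)
    (hA : ∀ μ ν, Continuous fun t => A t μ ν)
    (hAskew : ∀ τ, (A τ)ᵀ = -A τ)
    (Λ : ℝ → Matrix (Fin 4) (Fin 4) ℝ)
    (hΛ : ∀ τ μ ν, HasDerivAt (fun s => Λ s μ ν) ((Λ τ * W τ) μ ν) τ)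
    (hΛ0 : Λ 0 = 1) (hinv : ∀ τ, IsUnit (Λ τ))
    (Ω : ℝ → Matrix (Fin 4) (Fin 4) ℝ) (Ω₀ : Matrix (Fin 4) (Fin 4) ℝ)
    (hskew : Ω₀ᵀ = -Ω₀)
    (hΩ : ∀ τ μ ν, HasDerivAt (fun s => Ω s μ ν)
      (((W τ)ᵀ * Ω τ + Ω τ * W τ + A τ) μ ν) τ)
    (hΩ0 : Ω 0 = Ω₀) :
    ∀ τ, (∀ μ ν, Ω τ μ ν = ((Λ τ)ᵀ * Ω₀ * Λ τ) μ ν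
        + ∫ t in (0:ℝ)..τ,
            (((Λ t)⁻¹ * Λ τ)ᵀ * A t * ((Λ t)⁻¹ * Λ τ)) μ ν) ∧
      (Ω τ)ᵀ = -Ω τ := by
  -- basic invertibility facts
  have hdet : ∀ τ, IsUnit (Λ τ).det := fun τ => (Matrix.isUnit_iff_isUnit_det _).mp (hinv τ)
  have hLI : ∀ τ, Λ τ * (Λ τ)⁻¹ = 1 := fun τ => Matrix.mul_nonsing_inv _ (hdet τ)
  have hIL : ∀ τ, (Λ τ)⁻¹ * Λ τ = 1 := fun τ => Matrix.nonsing_inv_mul _ (hdet τ)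
  -- matrix-level derivatives
  have hΛ' : ∀ τ, HasDerivAt Λ (Λ τ * W τ) τ :=
    fun τ => hasDerivAt_of_entries (hΛ τ)
  have hΩ' : ∀ τ, HasDerivAt Ω ((W τ)ᵀ * Ω τ + Ω τ * W τ + A τ) τ :=
    fun τ => hasDerivAt_of_entries (hΩ τ)
  -- derivative of the inverse
  have hI' : ∀ τ, HasDerivAt (fun s => (Λ s)⁻¹) (-(W τ * (Λ τ)⁻¹)) τ := by
    intro τ
    have h1 := (hasFDerivAt_ringInverse (𝕜 := ℝ) (R := M4aux) (hinv τ).unit).comp τ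
      (hΛ' τ).hasFDerivAt
    have h2 : HasDerivAt (fun s => Ring.inverse (Λ s))
        (-((Λ τ)⁻¹ * (Λ τ * W τ) * (Λ τ)⁻¹)) τ := by
      refine h1.hasDerivAt.congr_deriv (Eq.symm ?_)
      simp [ContinuousLinearMap.mulLeftRight, Matrix.nonsing_inv_eq_ringInverse]
      show _ = -(Ring.inverse (Λ τ) * ((1:ℝ) • (Λ τ * W τ)) * Ring.inverse (Λ τ))
      rw [one_smul]
    have h3 : (fun s => Ring.inverse (Λ s)) = fun s => (Λ s)⁻¹ := by
      funext s; rw [Matrix.nonsing_inv_eq_ringInverse]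
    rw [h3] at h2
    simpa [← mul_assoc, hIL τ] using h2
  -- derivative of the transposed inverse
  have hT' : ∀ τ, HasDerivAt (fun s => ((Λ s)⁻¹)ᵀ) ((-(W τ * (Λ τ)⁻¹))ᵀ) τ := by
    intro τ
    refine hasDerivAt_of_entries fun μ ν => ?_
    exact entry_hasDerivAt (hI' τ) ν μ
  -- the conjugated function C and its derivative
  set C : ℝ → M4aux := fun s => ((Λ s)⁻¹)ᵀ * Ω s * (Λ s)⁻¹ with hCdef
  set g : ℝ → M4aux := fun t => ((Λ t)⁻¹)ᵀ * A t * (Λ t)⁻¹ with hgdef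
  have hC' : ∀ τ, HasDerivAt C (g τ) τ := by
    intro τ
    have := ((hT' τ).mul (hΩ' τ)).mul (hI' τ)
    refine this.congr_deriv (Eq.symm ?_)
    show ((Λ τ)⁻¹)ᵀ * A τ * (Λ τ)⁻¹ = _
    simp only [transpose_neg, transpose_mul, Pi.mul_apply]
    noncomm_ring
  -- continuity of entries of g
  have hIc : Continuous fun t => (Λ t)⁻¹ := by
    rw [continuous_iff_continuousAt]; exact fun t => (hI' t).continuousAt
  have hIe : ∀ a b, Continuous fun t => (Λ t)⁻¹ a b := fun a b =>
    ((entryCLM a b).continuous).comp hIc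
  have hge : ∀ μ ν, Continuous fun t => g t μ ν := by
    intro μ ν
    have h5 : ∀ t, g t μ ν = ∑ b, (∑ a, (Λ t)⁻¹ a μ * A t a b) * (Λ t)⁻¹ b ν := by
      intro t; simp [hgdef, mul_apply, transpose_apply, Finset.sum_mul]
    simp only [h5]
    exact continuous_finset_sum _ fun b _ =>
      ((continuous_finset_sum _ fun a _ => (hIe a μ).mul (hA a b)).mul (hIe b ν))
  have hC0 : C 0 = Ω₀ := by
    simp [hCdef, hΛ0, hΩ0]
  have key : ∀ τ μ ν, C τ μ ν = Ω₀ μ ν + ∫ t in (0:ℝ)..τ, g t μ ν := by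
    intro τ μ ν
    have h6 := intervalIntegral.integral_eq_sub_of_hasDerivAt
      (f := fun s => C s μ ν) (f' := fun t => g t μ ν) (a := 0) (b := τ)
      (fun t _ => entry_hasDerivAt (hC' t) μ ν) ((hge μ ν).intervalIntegrable 0 τ)
    have h7 : C 0 μ ν = Ω₀ μ ν := by rw [hC0]
    rw [h6, h7]; ring
  intro τ
  set J : M4aux := Matrix.of (fun μ ν => ∫ t in (0:ℝ)..τ, g t μ ν) with hJdef
  have hCτ : C τ = Ω₀ + J := by
    ext μ ν; rw [key τ μ ν]; rfl
  have hΩτ : Ω τ = (Λ τ)ᵀ * (Ω₀ + J) * Λ τ := by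
    rw [← hCτ]
    show Ω τ = (Λ τ)ᵀ * (((Λ τ)⁻¹)ᵀ * Ω τ * (Λ τ)⁻¹) * Λ τ
    have h4 : (Λ τ)ᵀ * ((Λ τ)⁻¹)ᵀ = 1 := by
      rw [← transpose_mul, hIL τ, transpose_one]
    calc Ω τ = ((Λ τ)ᵀ * ((Λ τ)⁻¹)ᵀ) * Ω τ * ((Λ τ)⁻¹ * Λ τ) := by
          rw [h4, hIL τ, one_mul, mul_one]
      _ = (Λ τ)ᵀ * (((Λ τ)⁻¹)ᵀ * Ω τ * (Λ τ)⁻¹) * Λ τ := by noncomm_ring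
  constructor
  · intro μ ν
    have hre : ∀ t, ((Λ t)⁻¹ * Λ τ)ᵀ * A t * ((Λ t)⁻¹ * Λ τ) = (Λ τ)ᵀ * g t * Λ τ := by
      intro t; simp only [hgdef, transpose_mul]; noncomm_ring
    have e1 : (∫ t in (0:ℝ)..τ, ((Λ τ)ᵀ * g t * Λ τ) μ ν)
        = ∑ b, (∑ a, Λ τ a μ * ∫ t in (0:ℝ)..τ, g t a b) * Λ τ b ν := by
      have h8 : ∀ t, ((Λ τ)ᵀ * g t * Λ τ) μ ν
          = ∑ b, (∑ a, Λ τ a μ * g t a b) * Λ τ b ν := by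
        intro t; simp [mul_apply, transpose_apply]
      simp only [h8]
      rw [intervalIntegral.integral_finset_sum
        (fun b _ => (((continuous_finset_sum _ fun a _ =>
          continuous_const.fun_mul (hge a b)).fun_mul continuous_const).intervalIntegrable 0 τ))]
      refine Finset.sum_congr rfl fun b _ => ?_
      rw [intervalIntegral.integral_mul_const, intervalIntegral.integral_finset_sum
        (fun a _ => ((continuous_const.fun_mul (hge a b)).intervalIntegrable 0 τ))]
      congr 1
      exact Finset.sum_congr rfl fun a _ => intervalIntegral.integral_const_mul _ _
    have e2 : ((Λ τ)ᵀ * J * Λ τ) μ ν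
        = ∑ b, (∑ a, Λ τ a μ * ∫ t in (0:ℝ)..τ, g t a b) * Λ τ b ν := by
      simp [hJdef, mul_apply, transpose_apply]
    have expand : (Λ τ)ᵀ * (Ω₀ + J) * Λ τ
        = (Λ τ)ᵀ * Ω₀ * Λ τ + (Λ τ)ᵀ * J * Λ τ := by noncomm_ring
    rw [hΩτ, expand]
    simp only [Matrix.add_apply, hre]
    rw [e1, e2]
  · have hJskew : Jᵀ = -J := by
      have hgs : ∀ t, (g t)ᵀ = -(g t) := by
        intro t
        show (((Λ t)⁻¹)ᵀ * A t * (Λ t)⁻¹)ᵀ = _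
        rw [transpose_mul, transpose_mul, transpose_transpose, hAskew t]
        simp only [hgdef]
        noncomm_ring
      ext μ ν
      have h9 : ∀ t, g t ν μ = -(g t μ ν) := by
        intro t
        have := congrFun (congrFun (hgs t) μ) ν
        simpa [transpose_apply] using this
      simp [hJdef, transpose_apply, h9, intervalIntegral.integral_neg]
    rw [hΩτ]
    rw [transpose_mul, transpose_mul, transpose_transpose, transpose_add, hskew, hJskew]
    noncomm_ring

end Aux

/-- The general solution of `dΩ_{μν}/dτ = Ω_{ρν} W^ρ_μ + Ω_{μρ} W^ρ_ν + A_{μν}(τ)`, i.e.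
`dΩ/dτ = Wᵀ Ω + Ω W + A`, with `Ω(0) = Ω⁰`, is
`Ω(τ) = Λ(τ)ᵀ Ω⁰ Λ(τ) + ∫₀^τ G(τ,t)ᵀ A(t) G(τ,t) dt` with `G(τ,t) = Λ(t)⁻¹ Λ(τ)`
(in index form `Ω_{μν}(τ) = Ω⁰_{αβ} Λ^α_μ Λ^β_ν + ∫₀^τ A_{αβ}(t) G_μ^α(τ,t) G_ν^β(τ,t) dt`),
and it is skew-symmetric for all `τ` whenever `Ω⁰` and `A(τ)` are. -/
theorem stmt_16 (W A : ℝ → Matrix (Fin 4) (Fin 4) ℝ)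
    (hW : Continuous W) (hA : Continuous A)
    (hAskew : ∀ τ, (A τ)ᵀ = -A τ)
    (Λ : ℝ → Matrix (Fin 4) (Fin 4) ℝ)
    (hΛ : ∀ τ μ ν, HasDerivAt (fun s => Λ s μ ν) ((Λ τ * W τ) μ ν) τ)
    (hΛ0 : Λ 0 = 1) (hinv : ∀ τ, IsUnit (Λ τ))
    (Ω : ℝ → Matrix (Fin 4) (Fin 4) ℝ) (Ω₀ : Matrix (Fin 4) (Fin 4) ℝ)
    (hskew : Ω₀ᵀ = -Ω₀)
    (hΩ : ∀ τ μ ν, HasDerivAt (fun s => Ω s μ ν)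
      (((W τ)ᵀ * Ω τ + Ω τ * W τ + A τ) μ ν) τ)
    (hΩ0 : Ω 0 = Ω₀) :
    ∀ τ, (∀ μ ν, Ω τ μ ν = ((Λ τ)ᵀ * Ω₀ * Λ τ) μ ν
        + ∫ t in (0:ℝ)..τ,
            (((Λ t)⁻¹ * Λ τ)ᵀ * A t * ((Λ t)⁻¹ * Λ τ)) μ ν) ∧
      (Ω τ)ᵀ = -Ω τ := by
  have hA' : ∀ μ ν : Fin 4, Continuous fun t => A t μ ν := fun μ ν =>
    (continuous_apply ν).comp ((continuous_apply μ).comp hA)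
  exact stmt_16_aux W A hA' hAskew Λ hΛ hΛ0 hinv Ω Ω₀ hskew hΩ hΩ0
end

section
/- The vector fields X⃗ = f⃗(τ) + ξ⃗×ω⃗(τ), X⁴ = (ξ⃗·df⃗/dτ)/(1+ξ⃗·a⃗) + g(τ) solve the generalized Killing equations (space block ∂_i X_j + ∂_j X_i = 0; cross block ∂_τ X_i = (1+ξ⃗·a⃗)² ∂_i X⁴; time block X^ν ∂_ν(1+ξ⃗·a⃗) + (1+ξ⃗·a⃗) ∂_τ X⁴ + ξ⃗·A⃗ = 0) for the metric ds² = dξ⃗² − (1+ξ⃗·a⃗(τ))² dτ² if and only if dω⃗/dτ = −a⃗ × df⃗/dτ, dg/dτ + f⃗·a⃗ = 0, and d/dτ(df⃗/dτ + g a⃗) + ω⃗ × a⃗ + A⃗ = 0. -/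
/-- Euclidean dot product on ℝ³. -/
noncomputable def dot3 (x y : Fin 3 → ℝ) : ℝ := ∑ i, x i * y i

/-- Spatial partial derivative `∂_i f` on ℝ³. -/
noncomputable def pd3 (f : (Fin 3 → ℝ) → ℝ) (i : Fin 3) (ξ : Fin 3 → ℝ) : ℝ :=
  fderiv ℝ f ξ (Pi.single i 1)

/-- The spatial part of the candidate generalized Killing field:
`X⃗(ξ,τ) = f⃗(τ) + ξ⃗ × ω⃗(τ)`. -/
noncomputable def Xsp (f ω : ℝ → Fin 3 → ℝ) (τ : ℝ) (ξ : Fin 3 → ℝ) : Fin 3 → ℝ :=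
  f τ + crossProduct ξ (ω τ)

/-- The time component of the candidate generalized Killing field:
`X⁴ = (ξ⃗·f⃗')/(1 + ξ⃗·a⃗(τ)) + g(τ)`, where `f'` is the derivative of `f`. -/
noncomputable def Xtm (a f' : ℝ → Fin 3 → ℝ) (g : ℝ → ℝ) (τ : ℝ) (ξ : Fin 3 → ℝ) : ℝ :=
  dot3 ξ (f' τ) / (1 + dot3 ξ (a τ)) + g τ

noncomputable def L3 (v : Fin 3 → ℝ) : (Fin 3 → ℝ) →L[ℝ] ℝ :=
  ∑ i, v i • (ContinuousLinearMap.proj i : (Fin 3 → ℝ) →L[ℝ] ℝ)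

lemma L3_apply (v x : Fin 3 → ℝ) : L3 v x = dot3 x v := by
  simp [L3, dot3, Fin.sum_univ_three, mul_comm]

lemma hasFDerivAt_dot3 (v ξ : Fin 3 → ℝ) :
    HasFDerivAt (fun y => dot3 y v) (L3 v) ξ := by
  have h : (fun y => dot3 y v) = fun y => L3 v y := by
    funext y; rw [L3_apply]
  rw [h]
  exact (L3 v).hasFDerivAt

lemma dot3_single (i : Fin 3) (v : Fin 3 → ℝ) : dot3 (Pi.single i 1) v = v i := by
  fin_cases i <;> simp [dot3, Fin.sum_univ_three, Pi.single_apply]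

lemma pd3_dot3 (c : ℝ) (v : Fin 3 → ℝ) (i : Fin 3) (ξ : Fin 3 → ℝ) :
    pd3 (fun y => c + dot3 y v) i ξ = v i := by
  have h : HasFDerivAt (fun y => c + dot3 y v) (L3 v) ξ :=
    (hasFDerivAt_dot3 v ξ).const_add c
  rw [pd3, h.fderiv, L3_apply, dot3_single]

-- cross product componentwise as a dot product in the first argument
lemma cross_as_dot (x w : Fin 3 → ℝ) (j : Fin 3) :
    crossProduct x w j = dot3 x (crossProduct w (Pi.single j 1)) := by
  fin_cases j <;> simp [cross_apply, dot3, Fin.sum_univ_three] <;> ring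

lemma pd3_Xsp (f ω : ℝ → Fin 3 → ℝ) (τ : ℝ) (ξ : Fin 3 → ℝ) (i j : Fin 3) :
    pd3 (fun y => Xsp f ω τ y j) i ξ = crossProduct (ω τ) (Pi.single j 1) i := by
  have h : (fun y => Xsp f ω τ y j)
      = fun y => f τ j + dot3 y (crossProduct (ω τ) (Pi.single j 1)) := by
    funext y; rw [Xsp]; simp [cross_as_dot y (ω τ) j]
  rw [h, pd3_dot3]

lemma pd3_Xtm (a f' : ℝ → Fin 3 → ℝ) (g : ℝ → ℝ) (τ : ℝ) (ξ : Fin 3 → ℝ) (i : Fin 3)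
    (hpos : 1 + dot3 ξ (a τ) > 0) :
    pd3 (fun y => Xtm a f' g τ y) i ξ =
      (f' τ i * (1 + dot3 ξ (a τ)) - dot3 ξ (f' τ) * a τ i) / (1 + dot3 ξ (a τ)) ^ 2 := by
  have hne : 1 + dot3 ξ (a τ) ≠ 0 := ne_of_gt hpos
  have hnum : HasFDerivAt (fun y => dot3 y (f' τ)) (L3 (f' τ)) ξ := hasFDerivAt_dot3 _ _
  have hden : HasFDerivAt (fun y => 1 + dot3 y (a τ)) (L3 (a τ)) ξ :=
    (hasFDerivAt_dot3 _ _).const_add 1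
  have hinv : HasFDerivAt (fun y => (1 + dot3 y (a τ))⁻¹)
      ((-((1 + dot3 ξ (a τ)) ^ 2)⁻¹) • L3 (a τ)) ξ := by
    have h2 := (hasDerivAt_inv hne).comp_hasFDerivAt ξ hden
    exact h2
  have hmul := hnum.mul hinv
  have h : HasFDerivAt (fun y => Xtm a f' g τ y)
      (dot3 ξ (f' τ) • ((-((1 + dot3 ξ (a τ)) ^ 2)⁻¹) • L3 (a τ))
        + (1 + dot3 ξ (a τ))⁻¹ • L3 (f' τ)) ξ := by
    have heq : (fun y => Xtm a f' g τ y)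
        = fun y => dot3 y (f' τ) * (1 + dot3 y (a τ))⁻¹ + g τ := by
      funext y; rw [Xtm, div_eq_mul_inv]
    rw [heq]
    exact hmul.add_const (g τ)
  rw [pd3, h.fderiv]
  simp only [ContinuousLinearMap.add_apply, ContinuousLinearMap.smul_apply, smul_eq_mul]
  rw [L3_apply, L3_apply, dot3_single, dot3_single]
  field_simp
  ring

lemma hasDerivAt_dot3t (ξ : Fin 3 → ℝ) (v w : ℝ → Fin 3 → ℝ) (τ : ℝ)
    (hv : ∀ i, HasDerivAt (fun s => v s i) (w τ i) τ) :
    HasDerivAt (fun s => dot3 ξ (v s)) (dot3 ξ (w τ)) τ := by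
  have h : (fun s => dot3 ξ (v s))
      = fun s => ξ 0 * v s 0 + ξ 1 * v s 1 + ξ 2 * v s 2 := by
    funext s; simp [dot3, Fin.sum_univ_three]
  rw [h]
  have := (((hv 0).const_mul (ξ 0)).add ((hv 1).const_mul (ξ 1))).add ((hv 2).const_mul (ξ 2))
  rw [show dot3 ξ (w τ) = ξ 0 * w τ 0 + ξ 1 * w τ 1 + ξ 2 * w τ 2 by
    simp [dot3, Fin.sum_univ_three]]
  exact this

lemma hasDerivAt_cross (ξ : Fin 3 → ℝ) (ω ω' : ℝ → Fin 3 → ℝ) (τ : ℝ)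
    (hω : ∀ i, HasDerivAt (fun s => ω s i) (ω' τ i) τ) (i : Fin 3) :
    HasDerivAt (fun s => crossProduct ξ (ω s) i) (crossProduct ξ (ω' τ) i) τ := by
  fin_cases i <;>
    simp only [cross_apply, Matrix.cons_val_zero, Matrix.cons_val_one, Matrix.head_cons,
      Matrix.cons_val_two, Matrix.tail_cons, Fin.isValue] <;>
    exact ((hω _).const_mul _).sub ((hω _).const_mul _)

lemma extract3 (a0 u : Fin 3 → ℝ) (c : ℝ)
    (h : ∀ ξ : Fin 3 → ℝ, 1 + dot3 ξ a0 > 0 → c + dot3 ξ u = 0) :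
    c = 0 ∧ ∀ k, u k = 0 := by
  have h0 : c = 0 := by
    have := h 0 (by simp [dot3]); simpa [dot3] using this
  refine ⟨h0, fun k => ?_⟩
  set ε : ℝ := (1 + |a0 k|)⁻¹ with hε
  have hpos : (0:ℝ) < 1 + |a0 k| := by positivity
  have hεpos : 0 < ε := inv_pos.mpr hpos
  set ξ : Fin 3 → ℝ := fun j => if j = k then ε else 0 with hξdef
  have hda : dot3 ξ a0 = ε * a0 k := by
    rw [hξdef]; simp [dot3, ite_mul, Finset.sum_ite_eq']
  have hdu : dot3 ξ u = ε * u k := by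
    rw [hξdef]; simp [dot3, ite_mul, Finset.sum_ite_eq']
  have hgt : 1 + dot3 ξ a0 > 0 := by
    rw [hda]
    have h1 : ε * a0 k ≥ -(ε * |a0 k|) := by
      have := mul_le_mul_of_nonneg_left (neg_abs_le (a0 k)) (le_of_lt hεpos)
      linarith [this]
    have h2 : ε * |a0 k| < 1 := by
      rw [hε, inv_mul_eq_div, div_lt_one hpos]; linarith
    linarith
  have := h ξ hgt
  rw [h0, hdu, zero_add] at this
  exact (mul_eq_zero.mp this).resolve_left (ne_of_gt hεpos)

noncomputable def dcomp (v : ℝ → Fin 3 → ℝ) : ℝ → Fin 3 → ℝ :=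
  fun τ i => deriv (fun s => v s i) τ

lemma dot3_sub (ξ u v : Fin 3 → ℝ) : dot3 ξ (u - v) = dot3 ξ u - dot3 ξ v := by
  simp [dot3, mul_sub, Finset.sum_sub_distrib]

lemma bac_cab (ξ v w : Fin 3 → ℝ) (i : Fin 3) :
    crossProduct ξ (-(crossProduct v w)) i = w i * dot3 ξ v - dot3 ξ w * v i := by
  fin_cases i <;> simp [cross_apply, dot3, Fin.sum_univ_three] <;> ring

lemma cross_sub_left (x y s : Fin 3 → ℝ) (k : Fin 3) :
    crossProduct x s k - crossProduct y s k = crossProduct (x - y) s k := by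
  fin_cases k <;> simp [cross_apply] <;> ring

lemma eq_zero_of_cross_single (u : Fin 3 → ℝ)
    (h : ∀ i k : Fin 3, crossProduct u (Pi.single i 1) k = 0) : ∀ k, u k = 0 := by
  intro k
  fin_cases k
  · have := h 1 2; simpa [cross_apply, Pi.single_apply] using this
  · have := h 0 2; simpa [cross_apply, Pi.single_apply] using this
  · have := h 0 1; simpa [cross_apply, Pi.single_apply] using this

/-- The fields `X⃗ = f⃗(τ) + ξ⃗×ω⃗(τ)`, `X⁴ = (ξ⃗·f⃗')/(1+ξ⃗·a⃗) + g(τ)` solve the generalized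
Killing equations (space block, cross block and time block) for the metric
`ds² = dξ⃗² − (1+ξ⃗·a⃗(τ))² dτ²` on the domain `1 + ξ⃗·a⃗(τ) > 0` if and only if
`ω⃗' = −a⃗ × f⃗'`, `g' + f⃗·a⃗ = 0` and `(f⃗' + g a⃗)' + ω⃗ × a⃗ + A⃗ = 0`. -/
theorem stmt_19 (a A f ω f' ω' h' : ℝ → Fin 3 → ℝ) (g : ℝ → ℝ) (g' : ℝ → ℝ)
    (hasm : ∀ i, ContDiff ℝ (⊤ : ℕ∞) (fun τ => a τ i))
    (hAsm : ∀ i, ContDiff ℝ (⊤ : ℕ∞) (fun τ => A τ i))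
    (hfsm : ∀ i, ContDiff ℝ (⊤ : ℕ∞) (fun τ => f τ i))
    (hωsm : ∀ i, ContDiff ℝ (⊤ : ℕ∞) (fun τ => ω τ i))
    (hgsm : ContDiff ℝ (⊤ : ℕ∞) g)
    (hf' : ∀ τ i, HasDerivAt (fun s => f s i) (f' τ i) τ)
    (hω' : ∀ τ i, HasDerivAt (fun s => ω s i) (ω' τ i) τ)
    (hg' : ∀ τ, HasDerivAt g (g' τ) τ)
    (hh' : ∀ τ i, HasDerivAt (fun s => f' s i + g s * a s i) (h' τ i) τ) :
    (∀ (τ : ℝ) (ξ : Fin 3 → ℝ), 1 + dot3 ξ (a τ) > 0 →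
      (∀ i j : Fin 3,
        pd3 (fun y => Xsp f ω τ y j) i ξ + pd3 (fun y => Xsp f ω τ y i) j ξ = 0) ∧
      (∀ i : Fin 3,
        deriv (fun s => Xsp f ω s ξ i) τ
          = (1 + dot3 ξ (a τ)) ^ 2 * pd3 (fun y => Xtm a f' g τ y) i ξ) ∧
      ((∑ i, Xsp f ω τ ξ i * pd3 (fun y => 1 + dot3 y (a τ)) i ξ)
        + Xtm a f' g τ ξ * deriv (fun s => 1 + dot3 ξ (a s)) τ
        + (1 + dot3 ξ (a τ)) * deriv (fun s => Xtm a f' g s ξ) τ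
        + dot3 ξ (A τ) = 0))
    ↔ ((∀ τ, ω' τ = -crossProduct (a τ) (f' τ)) ∧
       (∀ τ, g' τ + dot3 (f τ) (a τ) = 0) ∧
       (∀ τ, h' τ + crossProduct (ω τ) (a τ) + A τ = 0)) := by
  have ha' : ∀ τ i, HasDerivAt (fun s => a s i) (dcomp a τ i) τ := fun τ i =>
    (((hasm i).differentiable (by simp)) τ).hasDerivAt
  have hf'' : ∀ τ i, HasDerivAt (fun s => f' s i)
      (h' τ i - g' τ * a τ i - g τ * dcomp a τ i) τ := by
    intro τ i
    have heq : (fun s => f' s i) = fun s => (f' s i + g s * a s i) - g s * a s i := by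
      funext s; ring
    rw [heq, sub_sub]
    exact (hh' τ i).sub ((hg' τ).mul (ha' τ i))
  have hderivXsp : ∀ τ (ξ : Fin 3 → ℝ) (i : Fin 3),
      deriv (fun s => Xsp f ω s ξ i) τ = f' τ i + crossProduct ξ (ω' τ) i := by
    intro τ ξ i
    have h1 : HasDerivAt (fun s => Xsp f ω s ξ i) (f' τ i + crossProduct ξ (ω' τ) i) τ := by
      have := (hf' τ i).add (hasDerivAt_cross ξ ω ω' τ (fun j => hω' τ j) i)
      exact this
    exact h1.deriv
  have hderivD : ∀ τ (ξ : Fin 3 → ℝ),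
      deriv (fun s => 1 + dot3 ξ (a s)) τ = dot3 ξ (dcomp a τ) := by
    intro τ ξ
    exact ((hasDerivAt_dot3t ξ a (dcomp a) τ (fun i => ha' τ i)).const_add 1).deriv
  have hderivXtm : ∀ τ (ξ : Fin 3 → ℝ), 1 + dot3 ξ (a τ) > 0 →
      deriv (fun s => Xtm a f' g s ξ) τ
        = (dot3 ξ (fun k => h' τ k - g' τ * a τ k - g τ * dcomp a τ k) * (1 + dot3 ξ (a τ))
            - dot3 ξ (f' τ) * dot3 ξ (dcomp a τ)) / (1 + dot3 ξ (a τ)) ^ 2 + g' τ := by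
    intro τ ξ hp
    have hN := hasDerivAt_dot3t ξ f' (fun τ k => h' τ k - g' τ * a τ k - g τ * dcomp a τ k) τ
      (fun i => hf'' τ i)
    have hD := (hasDerivAt_dot3t ξ a (dcomp a) τ (fun i => ha' τ i)).const_add 1
    have hdiv := (hN.div hD (ne_of_gt hp)).add (hg' τ)
    have : HasDerivAt (fun s => Xtm a f' g s ξ)
        ((dot3 ξ (fun k => h' τ k - g' τ * a τ k - g τ * dcomp a τ k) * (1 + dot3 ξ (a τ))
            - dot3 ξ (f' τ) * dot3 ξ (dcomp a τ)) / (1 + dot3 ξ (a τ)) ^ 2 + g' τ) τ := by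
      exact hdiv
    exact this.deriv
  -- normal form of the time block
  have hTB : ∀ τ (ξ : Fin 3 → ℝ), 1 + dot3 ξ (a τ) > 0 →
      ((∑ i, Xsp f ω τ ξ i * pd3 (fun y => 1 + dot3 y (a τ)) i ξ)
        + Xtm a f' g τ ξ * deriv (fun s => 1 + dot3 ξ (a s)) τ
        + (1 + dot3 ξ (a τ)) * deriv (fun s => Xtm a f' g s ξ) τ
        + dot3 ξ (A τ))
      = (g' τ + dot3 (f τ) (a τ))
        + dot3 ξ (fun k => h' τ k + crossProduct (ω τ) (a τ) k + A τ k) := by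
    intro τ ξ hp
    have hpd : ∀ i, pd3 (fun y => 1 + dot3 y (a τ)) i ξ = a τ i := fun i =>
      pd3_dot3 1 (a τ) i ξ
    rw [hderivD, hderivXtm τ ξ hp]
    simp only [hpd, Xsp, Xtm, Pi.add_apply]
    have hne : 1 + dot3 ξ (a τ) ≠ 0 := ne_of_gt hp
    simp only [dot3, cross_apply, Fin.sum_univ_three, Matrix.cons_val_zero,
      Matrix.cons_val_one, Matrix.head_cons, Matrix.cons_val_two, Matrix.tail_cons]
    simp only [dot3, Fin.sum_univ_three] at hne
    generalize hD : 1 + (ξ 0 * a τ 0 + ξ 1 * a τ 1 + ξ 2 * a τ 2) = D at *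
    field_simp
    subst hD
    ring
  constructor
  · intro hK
    refine ⟨?_, ?_, ?_⟩
    · -- ω' = -a × f'
      intro τ
      have hCB : ∀ (ξ : Fin 3 → ℝ), 1 + dot3 ξ (a τ) > 0 → ∀ i,
          crossProduct ξ (ω' τ) i = crossProduct ξ (-(crossProduct (a τ) (f' τ))) i := by
        intro ξ hp i
        have h2 := (hK τ ξ hp).2.1 i
        rw [hderivXsp, pd3_Xtm a f' g τ ξ i hp] at h2
        rw [bac_cab]
        have hne : 1 + dot3 ξ (a τ) ≠ 0 := ne_of_gt hp
        have hr : (1 + dot3 ξ (a τ)) ^ 2 *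
            ((f' τ i * (1 + dot3 ξ (a τ)) - dot3 ξ (f' τ) * a τ i) / (1 + dot3 ξ (a τ)) ^ 2)
            = f' τ i * (1 + dot3 ξ (a τ)) - dot3 ξ (f' τ) * a τ i := by
          field_simp
        rw [hr] at h2
        linear_combination h2
      have hz : ∀ i : Fin 3, ∀ k,
          (crossProduct (ω' τ) (Pi.single i 1)
            - crossProduct (-(crossProduct (a τ) (f' τ))) (Pi.single i 1)) k = 0 := by
        intro i
        refine (extract3 (a τ) _ 0 ?_).2
        intro ξ hp
        rw [zero_add, dot3_sub, ← cross_as_dot, ← cross_as_dot, hCB ξ hp i, sub_self]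
      have hz2 : ∀ i k : Fin 3,
          crossProduct (ω' τ - -(crossProduct (a τ) (f' τ))) (Pi.single i 1) k = 0 := by
        intro i k
        rw [← cross_sub_left]
        exact hz i k
      have hz3 := eq_zero_of_cross_single _ hz2
      funext k
      have := hz3 k
      simp only [Pi.sub_apply] at this
      linarith
    · intro τ
      have := extract3 (a τ) (fun k => h' τ k + crossProduct (ω τ) (a τ) k + A τ k)
        (g' τ + dot3 (f τ) (a τ)) (fun ξ hp => by rw [← hTB τ ξ hp]; exact (hK τ ξ hp).2.2)
      exact this.1
    · intro τ
      have := extract3 (a τ) (fun k => h' τ k + crossProduct (ω τ) (a τ) k + A τ k)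
        (g' τ + dot3 (f τ) (a τ)) (fun ξ hp => by rw [← hTB τ ξ hp]; exact (hK τ ξ hp).2.2)
      funext k
      have hk := this.2 k
      simpa using hk
  · rintro ⟨h1, h2, h3⟩ τ ξ hp
    have hne : 1 + dot3 ξ (a τ) ≠ 0 := ne_of_gt hp
    refine ⟨?_, ?_, ?_⟩
    · intro i j
      rw [pd3_Xsp, pd3_Xsp]
      fin_cases i <;> fin_cases j <;>
        simp [cross_apply, Pi.single_apply] <;> ring
    · intro i
      rw [hderivXsp, pd3_Xtm a f' g τ ξ i hp, h1 τ, bac_cab]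
      field_simp
      ring
    · rw [hTB τ ξ hp]
      have hW : ∀ k, h' τ k + crossProduct (ω τ) (a τ) k + A τ k = 0 := by
        intro k
        have := congrFun (h3 τ) k
        simpa using this
      have hc : g' τ + dot3 (f τ) (a τ) = 0 := h2 τ
      rw [hc]
      simp [dot3, hW]
end
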